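/- arXiv:2203.07368 — 2 statements merged into one kernel-verified Lean document; each statement's English description precedes it below -/
import Mathlib

section
/- For every integer H ≥ 1 and every integer i ≥ 1, the series ∑_{t=i}^{∞} η_i^t converges and equals 1 + 1/H. -/
/-- The learning rate `η_j = (H+1)/(H+j)`. -/
noncomputable def eta (H j : ℕ) : ℝ := ((H : ℝ) + 1) / ((H : ℝ) + j)

/-- The rescaled learning rate `η_i^t`:  `η_i^t = η_i ∏_{j=i+1}^t (1 - η_j)` for `1 ≤ i ≤ t`
(so `η_i^i = η_i`), `η_i^t = 0` for `t < i`, and `η_0^t = ∏_{j=1}^t (1 - η_j)`. -/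
noncomputable def etaStep (H i t : ℕ) : ℝ :=
  if i = 0 then ∏ j ∈ Finset.Icc 1 t, (1 - eta H j)
  else if i ≤ t then eta H i * ∏ j ∈ Finset.Icc (i + 1) t, (1 - eta H j)
  else 0

/-!
Writing `P_n = ∏_{j=i+1}^n (1 - η_j)` and using `1 - η_j = (j-1)/(H+j)`, one checks
`η_i^{n+1} = T_n - T_{n+1}` for `T_n = (η_i / H) n P_n`, so the series telescopes to
`η_i^i + T_i = 1 + 1/H`, provided `T_n → 0`. The latter holds because
`(n+1) n P_n` is nonincreasing (this is where `H ≥ 1` enters), so `T_n = O(1/n)`.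
-/

open Filter Topology Finset

theorem Antitone.hasSum_sub_succ {f : ℕ → ℝ} {l : ℝ} (hf : Antitone f)
    (h : Tendsto f atTop (𝓝 l)) : HasSum (fun n ↦ f n - f (n + 1)) (f 0 - l) := by
  rw [hasSum_iff_tendsto_nat_of_nonneg fun n ↦ sub_nonneg.2 (hf n.le_succ)]
  simpa only [sum_range_sub'] using tendsto_const_nhds.sub h

noncomputable def etaProd (H i n : ℕ) : ℝ := ∏ j ∈ Icc (i + 1) n, (1 - eta H j)

/-- For `i ≤ n` this is the tail `∑_{t > n} η_i^t`. -/
noncomputable def etaTail (H i n : ℕ) : ℝ := eta H i / H * (n * etaProd H i n)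

variable {H i j n t : ℕ}

theorem eta_nonneg : 0 ≤ eta H j := by unfold eta; positivity

theorem one_sub_eta (hj : 1 ≤ j) : 1 - eta H j = (j - 1) / (H + j) := by
  have : (0 : ℝ) < H + j := by positivity
  unfold eta
  field_simp
  ring

theorem one_sub_eta_nonneg (hj : 1 ≤ j) : 0 ≤ 1 - eta H j := by
  rw [one_sub_eta hj]
  have : (1 : ℝ) ≤ j := by exact_mod_cast hj
  exact div_nonneg (by linarith) (by positivity)

theorem etaProd_self : etaProd H i i = 1 := by simp [etaProd]

theorem etaProd_succ (h : i ≤ n) : etaProd H i (n + 1) = etaProd H i n * (n / (H + n + 1)) := by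
  rw [etaProd, prod_Icc_succ_top (by omega), one_sub_eta (by omega), etaProd]
  push_cast
  ring_nf

theorem etaProd_nonneg : 0 ≤ etaProd H i n :=
  prod_nonneg fun j hj ↦ one_sub_eta_nonneg (by simp at hj; omega)

theorem etaStep_of_lt (h : t < i) : etaStep H i t = 0 := by
  simp [etaStep, show i ≠ 0 by omega, show ¬ i ≤ t by omega]

theorem etaStep_of_le (hi : i ≠ 0) (h : i ≤ t) : etaStep H i t = eta H i * etaProd H i t := by
  simp [etaStep, hi, h, etaProd]

theorem etaStep_nonneg : 0 ≤ etaStep H i t := by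
  unfold etaStep
  split_ifs
  · exact prod_nonneg fun j hj ↦ one_sub_eta_nonneg (by simp at hj; omega)
  · exact mul_nonneg eta_nonneg etaProd_nonneg
  · rfl

theorem mul_etaProd_le (hH : 1 ≤ H) (h : i ≤ n) :
    n * (n + 1) * etaProd H i n ≤ i * (i + 1) := by
  induction n, h using Nat.le_induction with
  | base => rw [etaProd_self, mul_one]
  | succ n h ih =>
    have hH' : (1 : ℝ) ≤ H := by exact_mod_cast hH
    have hP : 0 ≤ n * (n + 1) * etaProd H i n := mul_nonneg (by positivity) etaProd_nonneg
    push_cast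
    calc (n + 1) * (n + 1 + 1) * etaProd H i (n + 1)
        = n * (n + 1) * etaProd H i n * ((n + 2) / (H + n + 1)) := by
          rw [etaProd_succ h]; ring
      _ ≤ n * (n + 1) * etaProd H i n :=
          mul_le_of_le_one_right hP (div_le_one_of_le₀ (by linarith) (by positivity))
      _ ≤ i * (i + 1) := ih

theorem etaStep_succ (hH : H ≠ 0) (hi : i ≠ 0) (h : i ≤ n) :
    etaStep H i (n + 1) = etaTail H i n - etaTail H i (n + 1) := by
  have : (0 : ℝ) < H + n + 1 := by positivity
  rw [etaStep_of_le hi (by omega), etaTail, etaTail, etaProd_succ h]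
  push_cast
  field_simp
  ring

theorem etaStep_self_add_etaTail (hH : H ≠ 0) (hi : i ≠ 0) :
    etaStep H i i + etaTail H i i = 1 + 1 / H := by
  have : (0 : ℝ) < H + i := by positivity
  rw [etaStep_of_le hi le_rfl, etaTail, etaProd_self, eta]
  field_simp

theorem tendsto_etaTail (hH : 1 ≤ H) : Tendsto (etaTail H i) atTop (𝓝 0) := by
  have hC := tendsto_one_div_add_atTop_nhds_zero_nat.const_mul (eta H i / H * (i * (i + 1)))
  rw [mul_zero] at hC
  refine squeeze_zero' (.of_forall fun n ↦ ?_) ((eventually_ge_atTop i).mono fun n hn ↦ ?_) hC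
  · exact mul_nonneg (div_nonneg eta_nonneg (by positivity))
      (mul_nonneg (by positivity) etaProd_nonneg)
  · rw [etaTail, mul_one_div, mul_div_assoc]
    refine mul_le_mul_of_nonneg_left ?_ (div_nonneg eta_nonneg (by positivity))
    rw [le_div_iff₀ (by positivity)]
    linarith [mul_etaProd_le hH hn]

/-- For every integer `H ≥ 1` and every integer `i ≥ 1`, the series `∑_{t=i}^∞ η_i^t` converges
and equals `1 + 1/H`.  (Since `η_i^t = 0` whenever `t < i`, the sum over all `t : ℕ` coincides
with the sum over `t ≥ i`.) -/
theorem stmt3 (H i : ℕ) (hH : 1 ≤ H) (hi : 1 ≤ i) :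
    HasSum (fun t : ℕ => etaStep H i t) (1 + 1 / (H : ℝ)) := by
  have hH0 : H ≠ 0 := by omega
  have hi0 : i ≠ 0 := by omega
  rw [← hasSum_nat_add_iff' (i + 1), sum_range_succ,
    sum_eq_zero fun t ht ↦ etaStep_of_lt (mem_range.1 ht), zero_add,
    ← etaStep_self_add_etaTail hH0 hi0, add_sub_cancel_left]
  have hstep (n : ℕ) :
      etaStep H i (n + (i + 1)) = etaTail H i (n + i) - etaTail H i (n + 1 + i) := by
    rw [← add_assoc, etaStep_succ hH0 hi0 (by omega), add_right_comm]
  have hanti : Antitone fun n ↦ etaTail H i (n + i) :=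
    antitone_nat_of_succ_le fun n ↦ sub_nonneg.1 (hstep n ▸ etaStep_nonneg)
  have hT := hanti.hasSum_sub_succ ((tendsto_etaTail hH).comp (tendsto_add_atTop_nat i))
  simpa only [zero_add, sub_zero, ← hstep] using hT
end

section
/- There exists an absolute constant C > 0 with the following property. For all positive integers S and T, every δ ∈ (0,1) with ST ≥ e·δ, every γ ∈ [1/2, 1), setting H := ⌈(4/(1−γ)) log(ST/δ)⌉, for every S×S row-stochastic matrix P, every probability row vector ρ ∈ ℝ^S, and every entrywise nonnegative vector V ∈ ℝ^S, the series ∑_{j=0}^{∞} [γ(1+1/H)³]^j ⟨ρ̃ P^j, V⟩ converges and is at most C·( log(ST/δ)·⟨d, V⟩/(1−γ) + δ‖V‖_∞/(S T⁴ (1−γ)) ), where d := (1−γ) ∑_{t=0}^{∞} γ^t ρP^t and ρ̃ := (d − (1−γ)ρ)/γ. -/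
/-!
Let `d` be the discounted occupancy. The flow equation `d = (1 - γ) ρ + γ d P` says `ρ̃ = d P`
and `γ d P ≤ d`; iterating, `γ ^ (j + 1) ρ̃ P ^ j = γ ^ (j + 1) d P ^ (j + 1) ≤ d` entrywise, while
`ρ̃ P ^ j` stays a probability vector. So `a j := ⟨ρ̃ P ^ j, V⟩` satisfies `a j ≤ ‖V‖∞` and
`γ ^ (j + 1) a j ≤ ⟨d, V⟩`. Since `1 / H ≤ (1 - γ) / 4`, the ratio `q = γ (1 + 1 / H) ^ 3` is at
most `1 - (1 - γ) / 4`. Split the series at `4 H ≈ 16 log (S T / δ) / (1 - γ)`: each early term is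
at most `(1 + 1 / H) ^ (12 H) ⋅ 2 ⟨d, V⟩ ≤ 2 e ^ 12 ⟨d, V⟩`, and the tail is at most
`q ^ (4 H) ‖V‖∞ / (1 - q) ≤ 4 (δ / (S T)) ^ 4 ‖V‖∞ / (1 - γ)`.
-/

open Matrix Real Finset

namespace Matrix

variable {R m n : Type*}

lemma vecMul_le_vecMul_of_nonneg [Fintype m] [Semiring R] [PartialOrder R] [IsOrderedRing R]
    {M : Matrix m n R} (hM : ∀ i j, 0 ≤ M i j) {x y : m → R} (hxy : x ≤ y) :
    x ᵥ* M ≤ y ᵥ* M :=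
  fun j => dotProduct_le_dotProduct_of_nonneg_right hxy fun i => hM i j

lemma pow_smul_vecMul_pow_le [Fintype n] [DecidableEq n] [CommSemiring R] [PartialOrder R]
    [IsOrderedRing R] {M : Matrix n n R} (hM : ∀ i j, 0 ≤ M i j) {c : R} (hc : 0 ≤ c) {x : n → R}
    (hx : c • (x ᵥ* M) ≤ x) (k : ℕ) : c ^ k • (x ᵥ* M ^ k) ≤ x := by
  induction k with
  | zero => simp
  | succ k ih =>
    calc c ^ (k + 1) • (x ᵥ* M ^ (k + 1)) = c • ((c ^ k • (x ᵥ* M ^ k)) ᵥ* M) := by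
          rw [smul_vecMul, smul_smul, vecMul_vecMul, ← pow_succ', ← pow_succ]
      _ ≤ c • (x ᵥ* M) := smul_le_smul_of_nonneg_left (vecMul_le_vecMul_of_nonneg hM ih) hc
      _ ≤ x := hx

lemma vecMul_mem_stdSimplex [Fintype n] [DecidableEq n] [CommSemiring R] [PartialOrder R]
    [IsOrderedRing R] {M : Matrix n n R} (hM : M ∈ rowStochastic R n) {x : n → R}
    (hx : x ∈ stdSimplex R n) :
    x ᵥ* M ∈ stdSimplex R n := by
  refine ⟨nonneg_vecMul_of_mem_rowStochastic hM hx.1, ?_⟩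
  rw [← dotProduct_one,
    vecMul_dotProduct_one_eq_one_rowStochastic hM (by rw [dotProduct_one, hx.2])]

end Matrix

lemma dotProduct_le_iSup_abs {n : Type*} [Fintype n] {w : n → ℝ} (hw : w ∈ stdSimplex ℝ n)
    (V : n → ℝ) : w ⬝ᵥ V ≤ ⨆ s, |V s| := by
  have hV : V ≤ fun _ => ⨆ s, |V s| := fun s =>
    (le_abs_self (V s)).trans (le_ciSup (f := fun s => |V s|) (Set.finite_range _).bddAbove s)
  calc w ⬝ᵥ V ≤ w ⬝ᵥ fun _ => ⨆ s, |V s| := dotProduct_le_dotProduct_of_nonneg_left hV hw.1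
    _ = ⨆ s, |V s| := by simp only [dotProduct, ← sum_mul, hw.2, one_mul]

section Occupancy

variable {n : Type*} [Fintype n] [DecidableEq n] {γ : ℝ} {ρ : n → ℝ} {P : Matrix n n ℝ}

noncomputable def discountedOccupancy (γ : ℝ) (ρ : n → ℝ) (P : Matrix n n ℝ) : n → ℝ :=
  fun s => (1 - γ) * ∑' t : ℕ, γ ^ t * (ρ ᵥ* (P ^ t)) s

lemma summable_discountedOccupancy (hγ0 : 0 ≤ γ) (hγ1 : γ < 1) (hρ : ρ ∈ stdSimplex ℝ n)
    (hP : P ∈ rowStochastic ℝ n) (s : n) : Summable fun t : ℕ => γ ^ t * (ρ ᵥ* (P ^ t)) s := by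
  refine .of_nonneg_of_le (fun t => ?_) (fun t => ?_) (summable_geometric_of_lt_one hγ0 hγ1)
  all_goals have := mem_Icc_of_mem_stdSimplex (vecMul_mem_stdSimplex (pow_mem hP t) hρ) s
  · exact mul_nonneg (pow_nonneg hγ0 t) this.1
  · exact mul_le_of_le_one_right (pow_nonneg hγ0 t) this.2

lemma discountedOccupancy_mem_stdSimplex (hγ0 : 0 ≤ γ) (hγ1 : γ < 1) (hρ : ρ ∈ stdSimplex ℝ n)
    (hP : P ∈ rowStochastic ℝ n) : discountedOccupancy γ ρ P ∈ stdSimplex ℝ n := by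
  have hpt (t : ℕ) := vecMul_mem_stdSimplex (pow_mem hP t) hρ
  refine ⟨fun s => mul_nonneg (by linarith) (tsum_nonneg fun t =>
    mul_nonneg (pow_nonneg hγ0 t) ((hpt t).1 s)), ?_⟩
  have hsum (t : ℕ) : ∑ s, γ ^ t * (ρ ᵥ* P ^ t) s = γ ^ t := by
    rw [← mul_sum, (hpt t).2, mul_one]
  simp only [discountedOccupancy, ← mul_sum]
  rw [← Summable.tsum_finsetSum fun s _ => summable_discountedOccupancy hγ0 hγ1 hρ hP s,
    tsum_congr hsum, tsum_geometric_of_lt_one hγ0 hγ1, mul_inv_cancel₀ (by linarith)]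

lemma discountedOccupancy_vecMul (hsum : ∀ s, Summable fun t : ℕ => γ ^ t * (ρ ᵥ* (P ^ t)) s)
    (s : n) :
    (discountedOccupancy γ ρ P ᵥ* P) s = (1 - γ) * ∑' t : ℕ, γ ^ t * (ρ ᵥ* (P ^ (t + 1))) s := by
  have hstep (t : ℕ) : ∑ s', γ ^ t * (ρ ᵥ* P ^ t) s' * P s' s = γ ^ t * (ρ ᵥ* P ^ (t + 1)) s := by
    rw [pow_succ, ← vecMul_vecMul]
    show _ = γ ^ t * ∑ s', (ρ ᵥ* P ^ t) s' * P s' s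
    simp only [mul_sum, mul_assoc]
  calc (discountedOccupancy γ ρ P ᵥ* P) s
      = ∑ s', (1 - γ) * ∑' t, γ ^ t * (ρ ᵥ* P ^ t) s' * P s' s :=
        sum_congr rfl fun s' _ => by rw [discountedOccupancy, tsum_mul_right, mul_assoc]
    _ = (1 - γ) * ∑' t, ∑ s', γ ^ t * (ρ ᵥ* P ^ t) s' * P s' s := by
        rw [← mul_sum, Summable.tsum_finsetSum fun s' _ => (hsum s').mul_right _]
    _ = _ := by simp only [hstep]

lemma discountedOccupancy_eq_add_vecMul
    (hsum : ∀ s, Summable fun t : ℕ => γ ^ t * (ρ ᵥ* (P ^ t)) s) (s : n) :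
    discountedOccupancy γ ρ P s = (1 - γ) * ρ s + γ * (discountedOccupancy γ ρ P ᵥ* P) s := by
  have hshift : ∑' t : ℕ, γ ^ (t + 1) * (ρ ᵥ* P ^ (t + 1)) s
      = γ * ∑' t : ℕ, γ ^ t * (ρ ᵥ* P ^ (t + 1)) s := by
    rw [← tsum_mul_left]
    exact tsum_congr fun t => by ring
  rw [discountedOccupancy_vecMul hsum, discountedOccupancy, (hsum s).tsum_eq_zero_add, hshift]
  simp only [pow_zero, vecMul_one, one_mul]
  ring

lemma discountedOccupancy_vecMul_eq_div (hγ : γ ≠ 0)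
    (hsum : ∀ s, Summable fun t : ℕ => γ ^ t * (ρ ᵥ* (P ^ t)) s) :
    discountedOccupancy γ ρ P ᵥ* P = fun s => (discountedOccupancy γ ρ P s - (1 - γ) * ρ s) / γ :=
  funext fun s => by
    rw [discountedOccupancy_eq_add_vecMul hsum s]
    field_simp
    ring

lemma pow_succ_smul_discountedOccupancy_vecMul_pow_le (hγ0 : 0 ≤ γ) (hγ1 : γ < 1)
    (hρ : ρ ∈ stdSimplex ℝ n) (hP : P ∈ rowStochastic ℝ n) (j : ℕ) :
    γ ^ (j + 1) • ((discountedOccupancy γ ρ P ᵥ* P) ᵥ* P ^ j) ≤ discountedOccupancy γ ρ P := by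
  have hstep : γ • (discountedOccupancy γ ρ P ᵥ* P) ≤ discountedOccupancy γ ρ P := fun s => by
    have := discountedOccupancy_eq_add_vecMul (summable_discountedOccupancy hγ0 hγ1 hρ hP) s
    simp only [Pi.smul_apply, smul_eq_mul]
    linarith [mul_nonneg (sub_nonneg.2 hγ1.le) (hρ.1 s)]
  rw [vecMul_vecMul, ← pow_succ']
  exact pow_smul_vecMul_pow_le hP.1 hγ0 hstep _

end Occupancy

lemma mul_one_add_pow_three_le {γ x : ℝ} (hγ0 : 0 ≤ γ) (hγ1 : γ ≤ 1) (hx0 : 0 ≤ x)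
    (hx : x ≤ (1 - γ) / 4) : γ * (1 + x) ^ 3 ≤ 1 - (1 - γ) / 4 := by
  have hpow : γ * (1 + x) ^ 3 ≤ γ * (1 + (1 - γ) / 4) ^ 3 := by gcongr
  have hε : 0 ≤ 1 - γ := sub_nonneg.2 hγ1
  nlinarith [pow_nonneg hε 2, pow_nonneg hε 3, pow_nonneg hε 4]

lemma one_add_pow_le_exp_mul {x : ℝ} (hx : 0 ≤ x) (k : ℕ) : (1 + x) ^ k ≤ exp (k * x) := by
  rw [exp_nat_mul]
  gcongr
  linarith [add_one_le_exp x]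

lemma mul_ceil_div_mul_mem_Icc {ε L : ℝ} (hε0 : 0 < ε) (hε1 : ε ≤ 1) (hL : 1 ≤ L) :
    ε * ⌈4 / ε * L⌉₊ ∈ Set.Icc (4 * L) (5 * L) := by
  have hle := Nat.le_ceil (4 / ε * L)
  have hlt := Nat.ceil_lt_add_one (by positivity : 0 ≤ 4 / ε * L)
  have hmul : ε * (4 / ε * L) = 4 * L := by field_simp
  constructor <;> nlinarith

lemma summable_pow_mul {q M : ℝ} {a : ℕ → ℝ} (hq0 : 0 ≤ q) (hq1 : q < 1) (ha0 : ∀ j, 0 ≤ a j)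
    (haM : ∀ j, a j ≤ M) : Summable fun j => q ^ j * a j :=
  .of_nonneg_of_le (fun j => mul_nonneg (pow_nonneg hq0 j) (ha0 j))
    (fun j => mul_le_mul_of_nonneg_left (haM j) (pow_nonneg hq0 j))
    ((summable_geometric_of_lt_one hq0 hq1).mul_right M)

lemma tsum_nat_add_pow_mul_le {q M : ℝ} {a : ℕ → ℝ} (hq0 : 0 ≤ q) (hq1 : q < 1)
    (ha0 : ∀ j, 0 ≤ a j) (haM : ∀ j, a j ≤ M) (N : ℕ) :
    ∑' j, q ^ (j + N) * a (j + N) ≤ q ^ N * M / (1 - q) := by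
  have hgeom : HasSum (fun j => q ^ N * M * q ^ j) (q ^ N * M / (1 - q)) := by
    simpa [div_eq_mul_inv] using (hasSum_geometric_of_lt_one hq0 hq1).mul_left (q ^ N * M)
  have hterm (j : ℕ) : q ^ (j + N) * a (j + N) ≤ q ^ N * M * q ^ j := by
    calc q ^ (j + N) * a (j + N) ≤ q ^ (j + N) * M :=
          mul_le_mul_of_nonneg_left (haM _) (pow_nonneg hq0 _)
      _ = q ^ N * M * q ^ j := by ring
  rw [← hgeom.tsum_eq]
  exact Summable.tsum_le_tsum hterm
    ((summable_nat_add_iff N).2 (summable_pow_mul hq0 hq1 ha0 haM)) hgeom.summable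

lemma sum_range_pow_mul_le {γ D : ℝ} {H : ℕ} {a : ℕ → ℝ} (hγ : 1 / 2 ≤ γ) (ha0 : ∀ j, 0 ≤ a j)
    (haD : ∀ j, γ ^ (j + 1) * a j ≤ D) :
    ∑ j ∈ range (4 * H), (γ * (1 + 1 / (H : ℝ)) ^ 3) ^ j * a j ≤ 8 * exp 12 * H * D := by
  have hterm : ∀ j ∈ range (4 * H), (γ * (1 + 1 / (H : ℝ)) ^ 3) ^ j * a j ≤ exp 12 * (2 * D) := by
    intro j hj
    have hH : (0 : ℝ) < H := by have := mem_range.1 hj; exact_mod_cast (by omega : 0 < H)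
    have hj' : (3 * j : ℕ) * (1 / (H : ℝ)) ≤ 12 := by
      rw [mul_one_div, div_le_iff₀ hH]
      exact_mod_cast (by have := mem_range.1 hj; omega : 3 * j ≤ 12 * H)
    have hgrowth : ((1 + 1 / (H : ℝ)) ^ 3) ^ j ≤ exp 12 := by
      rw [← pow_mul]
      exact (one_add_pow_le_exp_mul (by positivity) _).trans (exp_le_exp.2 hj')
    have hγa : γ ^ j * a j ≤ 2 * D := by
      have := haD j
      rw [pow_succ] at this
      nlinarith [mul_nonneg (pow_nonneg (by linarith : (0 : ℝ) ≤ γ) j) (ha0 j)]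
    calc (γ * (1 + 1 / (H : ℝ)) ^ 3) ^ j * a j
        = ((1 + 1 / (H : ℝ)) ^ 3) ^ j * (γ ^ j * a j) := by rw [mul_pow]; ring
      _ ≤ exp 12 * (2 * D) :=
        mul_le_mul hgrowth hγa (mul_nonneg (pow_nonneg (by linarith) j) (ha0 j)) (exp_pos _).le
  calc _ ≤ ∑ _j ∈ range (4 * H), exp 12 * (2 * D) := sum_le_sum hterm
    _ = 8 * exp 12 * H * D := by rw [sum_const, card_range, nsmul_eq_mul]; push_cast; ring

theorem summable_and_tsum_pow_mul_le {γ L M D : ℝ} {H : ℕ} {a : ℕ → ℝ} (hγ : 1 / 2 ≤ γ)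
    (hγ1 : γ < 1) (hL : 1 ≤ L) (hH : (1 - γ) * H ∈ Set.Icc (4 * L) (5 * L))
    (ha0 : ∀ j, 0 ≤ a j) (haM : ∀ j, a j ≤ M) (haD : ∀ j, γ ^ (j + 1) * a j ≤ D) :
    Summable (fun j => (γ * (1 + 1 / (H : ℝ)) ^ 3) ^ j * a j) ∧
      ∑' j, (γ * (1 + 1 / (H : ℝ)) ^ 3) ^ j * a j ≤
        40 * exp 12 * (L * D / (1 - γ) + exp (-(4 * L)) * M / (1 - γ)) := by
  set q := γ * (1 + 1 / (H : ℝ)) ^ 3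
  have hε : 0 < 1 - γ := by linarith
  have hHpos : (0 : ℝ) < H := pos_of_mul_pos_right (by linarith [hH.1]) hε.le
  have hq : q ≤ 1 - (1 - γ) / 4 := by
    refine mul_one_add_pow_three_le (by linarith) hγ1.le (by positivity) ?_
    rw [div_le_div_iff₀ hHpos (by norm_num)]
    linarith [hH.1]
  have hq0 : 0 ≤ q := by positivity
  have hq1 : q < 1 := by linarith
  have hM : 0 ≤ M := (ha0 0).trans (haM 0)
  have hD : 0 ≤ D := (mul_nonneg (pow_nonneg (by linarith) 1) (ha0 0)).trans (haD 0)
  have hC : 4 ≤ 40 * exp 12 := by linarith [one_le_exp (by norm_num : (0 : ℝ) ≤ 12)]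
  have hs := summable_pow_mul hq0 hq1 ha0 haM
  refine ⟨hs, ?_⟩
  have hhead : ∑ j ∈ range (4 * H), q ^ j * a j ≤ 40 * exp 12 * (L * D / (1 - γ)) := by
    refine (sum_range_pow_mul_le hγ ha0 haD).trans ?_
    rw [mul_div_assoc', le_div_iff₀ hε]
    nlinarith [mul_le_mul_of_nonneg_left hH.2 (by positivity : 0 ≤ 8 * exp 12 * D)]
  have hqN : q ^ (4 * H) ≤ exp (-(4 * L)) :=
    calc q ^ (4 * H) ≤ exp (-((1 - γ) / 4)) ^ (4 * H) :=
          pow_le_pow_left₀ hq0 (by linarith [add_one_le_exp (-((1 - γ) / 4))]) _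
      _ = exp (-((1 - γ) * H)) := by rw [← exp_nat_mul]; push_cast; ring_nf
      _ ≤ exp (-(4 * L)) := exp_le_exp.2 (by linarith [hH.1])
  have htail : ∑' j, q ^ (j + 4 * H) * a (j + 4 * H) ≤
      40 * exp 12 * (exp (-(4 * L)) * M / (1 - γ)) :=
    calc _ ≤ q ^ (4 * H) * M / (1 - q) := tsum_nat_add_pow_mul_le hq0 hq1 ha0 haM _
      _ ≤ exp (-(4 * L)) * M / ((1 - γ) / 4) :=
          div_le_div₀ (by positivity) (mul_le_mul_of_nonneg_right hqN hM) (by positivity)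
            (by linarith)
      _ = 4 * (exp (-(4 * L)) * M / (1 - γ)) := by field_simp
      _ ≤ _ := mul_le_mul_of_nonneg_right hC (by positivity)
  rw [← hs.sum_add_tsum_nat_add (4 * H), mul_add]
  exact add_le_add hhead htail

lemma exp_neg_four_mul_log_le {S T δ : ℝ} (hS : 1 ≤ S) (hT : 1 ≤ T) (hδ0 : 0 < δ) (hδ1 : δ ≤ 1) :
    exp (-(4 * log (S * T / δ))) ≤ δ / (S * T ^ 4) := by
  have hx : 0 < S * T / δ := by positivity
  rw [exp_neg, show 4 * log (S * T / δ) = ((4 : ℕ) : ℝ) * log (S * T / δ) by norm_num, exp_nat_mul,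
    exp_log hx, ← inv_pow, inv_div, div_pow, mul_pow]
  refine div_le_div₀ hδ0.le (pow_le_of_le_one hδ0.le hδ1 (by norm_num)) (by positivity) ?_
  gcongr
  exact le_self_pow₀ hS (by norm_num)

/-- There exists an absolute constant `C > 0` such that: for all positive integers `S`, `T`,
every `δ ∈ (0,1)` with `S·T ≥ e·δ`, every `γ ∈ [1/2,1)`, with
`H := ⌈(4/(1−γ)) log(S·T/δ)⌉`, for every `S×S` row-stochastic matrix `P`, every probability
row vector `ρ`, and every entrywise nonnegative `V`, the series
`∑_{j=0}^∞ [γ(1+1/H)³]^j ⟨ρ̃P^j, V⟩` converges and is at most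
`C·(log(S·T/δ)·⟨d, V⟩/(1−γ) + δ‖V‖_∞/(S T⁴ (1−γ)))`, where
`d := (1−γ) ∑_{t=0}^∞ γ^t ρP^t` and `ρ̃ := (d − (1−γ)ρ)/γ`. -/
theorem stmt5 :
    ∃ C : ℝ, 0 < C ∧
      ∀ (S T : ℕ), 0 < S → 0 < T →
      ∀ δ : ℝ, 0 < δ → δ < 1 → Real.exp 1 * δ ≤ (S : ℝ) * T →
      ∀ γ : ℝ, 1 / 2 ≤ γ → γ < 1 →
      ∀ P : Matrix (Fin S) (Fin S) ℝ,
        (∀ s s', 0 ≤ P s s') → (∀ s, ∑ s', P s s' = 1) →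
      ∀ ρ : Fin S → ℝ, (∀ s, 0 ≤ ρ s) → (∑ s, ρ s = 1) →
      ∀ V : Fin S → ℝ, (∀ s, 0 ≤ V s) →
      letI H : ℕ := ⌈(4 / (1 - γ)) * Real.log ((S : ℝ) * T / δ)⌉₊
      letI d : Fin S → ℝ := fun s => (1 - γ) * ∑' t : ℕ, γ ^ t * (ρ ᵥ* (P ^ t)) s
      letI ρt : Fin S → ℝ := fun s => (d s - (1 - γ) * ρ s) / γ
      letI f : ℕ → ℝ :=
        fun j => (γ * (1 + 1 / (H : ℝ)) ^ 3) ^ j * ∑ s, (ρt ᵥ* (P ^ j)) s * V s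
      Summable f ∧
        ∑' j, f j ≤ C * (Real.log ((S : ℝ) * T / δ) * (∑ s, d s * V s) / (1 - γ) +
          δ * (⨆ s, |V s|) / ((S : ℝ) * (T : ℝ) ^ 4 * (1 - γ))) := by
  refine ⟨40 * exp 12, by positivity, ?_⟩
  intro S T hS hT δ hδ0 hδ1 hδST γ hγ hγ1 P hP0 hP1 ρ hρ0 hρ1 V hV
  have hP : P ∈ rowStochastic ℝ (Fin S) := mem_rowStochastic_iff_sum.2 ⟨hP0, hP1⟩
  have hρ : ρ ∈ stdSimplex ℝ (Fin S) := ⟨hρ0, hρ1⟩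
  have hγ0 : 0 ≤ γ := by linarith
  have hL : 1 ≤ log (S * T / δ) := (le_log_iff_exp_le (by positivity)).2 ((le_div_iff₀ hδ0).2 hδST)
  rw [show (fun s => (1 - γ) * ∑' t : ℕ, γ ^ t * (ρ ᵥ* (P ^ t)) s) = discountedOccupancy γ ρ P
    from rfl, ← discountedOccupancy_vecMul_eq_div (by linarith)
    (summable_discountedOccupancy hγ0 hγ1 hρ hP)]
  set d := discountedOccupancy γ ρ P
  have hw (j : ℕ) : (d ᵥ* P) ᵥ* P ^ j ∈ stdSimplex ℝ (Fin S) := vecMul_mem_stdSimplex (pow_mem hP j)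
    (vecMul_mem_stdSimplex hP (discountedOccupancy_mem_stdSimplex hγ0 hγ1 hρ hP))
  have haD (j : ℕ) : γ ^ (j + 1) * ((d ᵥ* P) ᵥ* P ^ j ⬝ᵥ V) ≤ d ⬝ᵥ V := by
    rw [← smul_eq_mul, ← smul_dotProduct]
    exact dotProduct_le_dotProduct_of_nonneg_right
      (pow_succ_smul_discountedOccupancy_vecMul_pow_le hγ0 hγ1 hρ hP j) hV
  obtain ⟨hs, hle⟩ := summable_and_tsum_pow_mul_le hγ hγ1 hL
    (mul_ceil_div_mul_mem_Icc (by linarith) (by linarith) hL)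
    (fun j => dotProduct_nonneg_of_nonneg (hw j).1 hV) (fun j => dotProduct_le_iSup_abs (hw j) V)
    haD
  refine ⟨hs, hle.trans (mul_le_mul_of_nonneg_left (add_le_add le_rfl ?_) (by positivity))⟩
  have hδ := exp_neg_four_mul_log_le (by exact_mod_cast hS : (1 : ℝ) ≤ S)
    (by exact_mod_cast hT : (1 : ℝ) ≤ T) hδ0 hδ1.le
  have hM : 0 ≤ ⨆ s, |V s| := Real.iSup_nonneg fun s => abs_nonneg (V s)
  calc exp (-(4 * log (S * T / δ))) * (⨆ s, |V s|) / (1 - γ)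
      ≤ δ / (S * T ^ 4) * (⨆ s, |V s|) / (1 - γ) := by gcongr
    _ = _ := by rw [div_mul_eq_mul_div, div_div]
end
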